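/- arXiv:1909.12110 — 2 statements merged into one kernel-verified Lean document; each statement's English description precedes it below -/
import Mathlib

section
/- For every f ∈ L²_⋄(Γ) and ς₁, ς₂ ∈ L∞₊(Ω), the Neumann-to-Dirichlet maps satisfy the two-sided monotonicity estimate: ∫_Ω (ς₂/ς₁)(ς₁ − ς₂) |∇ u_f^{ς₂}|² dx ≤ ⟨(Λ(ς₂) − Λ(ς₁)) f, f⟩ ≤ ∫_Ω (ς₁ − ς₂) |∇ u_f^{ς₂}|² dx. -/
open MeasureTheory Set Filter Topology
open scoped ENNReal NNReal RealInnerProductSpace MeasureTheory Classical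

noncomputable section

abbrev Euc (d : ℕ) := EuclideanSpace ℝ (Fin d)

namespace EIT

variable {d : ℕ}

/-- The (d−1)-dimensional Hausdorff (surface) measure on ℝ^d restricted to a set `Γ`. -/
def bdry (Γ : Set (Euc d)) : Measure (Euc d) := (μH[(d : ℝ) - 1]).restrict Γ

/-- A set has Lipschitz boundary: near each of its boundary points, its interior coincides,
in suitable linear coordinates, with the open region strictly above the graph of a Lipschitz
function. -/
def HasLipschitzBoundary (A : Set (Euc d)) : Prop :=
  ∀ x ∈ frontier A, ∃ U : Set (Euc d), IsOpen U ∧ x ∈ U ∧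
    ∃ (e : Euc d ≃L[ℝ] (EuclideanSpace ℝ (Fin (d - 1)) × ℝ))
      (φ : EuclideanSpace ℝ (Fin (d - 1)) → ℝ) (L : ℝ≥0),
      LipschitzWith L φ ∧
      interior A ∩ U = {y ∈ U | φ (e y).1 < (e y).2}

/-- Ω is a bounded Lipschitz domain with connected complement of its closure. -/
def IsEITDomain (Ω : Set (Euc d)) : Prop :=
  IsOpen Ω ∧ IsConnected Ω ∧ Bornology.IsBounded Ω ∧ HasLipschitzBoundary Ω ∧
    IsConnected ((closure Ω)ᶜ)

/-- Γ is a relatively open nonempty piece of the boundary ∂Ω. -/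
def IsBoundaryPiece (Ω Γ : Set (Euc d)) : Prop :=
  Γ.Nonempty ∧ Γ ⊆ frontier Ω ∧ ∃ V : Set (Euc d), IsOpen V ∧ Γ = V ∩ frontier Ω

/-- A set has finitely many connected components. -/
def FinitelyManyComponents (A : Set (Euc d)) : Prop :=
  {s : Set (Euc d) | ∃ x ∈ A, s = connectedComponentIn A x}.Finite

/-- The closure of an open set, with finitely many components and Lipschitz boundary. -/
def IsNiceClosedSet (C : Set (Euc d)) : Prop :=
  C = closure (interior C) ∧ FinitelyManyComponents C ∧ HasLipschitzBoundary C

/-- Assumption 1 of the paper for the pair of extreme inclusions `(C₀, Cinf)` inside `Ω`. -/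
def Assumption1 (Ω C₀ Cinf : Set (Euc d)) : Prop :=
  C₀ ⊆ Ω ∧ Cinf ⊆ Ω ∧ IsNiceClosedSet C₀ ∧ IsNiceClosedSet Cinf ∧
    C₀ ∩ Cinf = ∅ ∧ IsConnected (Ω \ C₀)

/-- ς ∈ L∞₊(A): essentially bounded, measurable, with positive essential infimum on `A`. -/
def MemLinfPlus (ς : Euc d → ℝ) (A : Set (Euc d)) : Prop :=
  AEStronglyMeasurable ς (volume.restrict A) ∧
    (∃ c : ℝ, 0 < c ∧ ∀ᵐ x ∂(volume.restrict A), c ≤ ς x) ∧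
    (∃ C : ℝ, ∀ᵐ x ∂(volume.restrict A), ς x ≤ C)

/-- `g` is the weak (distributional) gradient of `u` on the open set `U`. -/
def HasWeakGradOn (u : Euc d → ℝ) (g : Euc d → Euc d) (U : Set (Euc d)) : Prop :=
  ∀ φ : Euc d → ℝ, ContDiff ℝ (⊤ : ℕ∞) φ → HasCompactSupport φ → tsupport φ ⊆ U →
    (∫ x in U, u x • gradient φ x) = - ∫ x in U, φ x • g x

/-- `u ∈ H¹(U)` with weak gradient `g`. -/
def MemH1 (u : Euc d → ℝ) (g : Euc d → Euc d) (U : Set (Euc d)) : Prop :=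
  MemLp u 2 (volume.restrict U) ∧ MemLp g 2 (volume.restrict U) ∧ HasWeakGradOn u g U

/-- L²-norm of a scalar function on `U` (w.r.t. Lebesgue measure). -/
def L2 (U : Set (Euc d)) (u : Euc d → ℝ) : ℝ := (eLpNorm u 2 (volume.restrict U)).toReal

/-- L²-norm of a vector field on `U` (w.r.t. Lebesgue measure). -/
def L2V (U : Set (Euc d)) (g : Euc d → Euc d) : ℝ := (eLpNorm g 2 (volume.restrict U)).toReal

/-- L²(Γ)-norm w.r.t. the surface measure. -/
def bdryL2 (Γ : Set (Euc d)) (f : Euc d → ℝ) : ℝ := (eLpNorm f 2 (bdry Γ)).toReal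

/-- H¹(U)-norm of `u` with weak gradient `g`. -/
def H1Norm (U : Set (Euc d)) (u : Euc d → ℝ) (g : Euc d → Euc d) : ℝ :=
  Real.sqrt ((L2 U u) ^ 2 + (L2V U g) ^ 2)

/-- The pointwise boundary values of `u` on `Γ` are compatible with its interior values on `U`,
i.e. `u|_Γ` is the trace of `u|_U`: some sequence of smooth functions converges to `u` both in
`H¹(U)` and in `L²(Γ)`. -/
def TraceCompatible (U Γ : Set (Euc d)) (u : Euc d → ℝ) (g : Euc d → Euc d) : Prop :=
  ∃ w : ℕ → Euc d → ℝ,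
    (∀ n, ContDiff ℝ (⊤ : ℕ∞) (w n)) ∧
    Tendsto (fun n => H1Norm U (fun x => w n x - u x)
      (fun x => gradient (w n) x - g x)) atTop (nhds 0) ∧
    Tendsto (fun n => bdryL2 Γ (fun x => w n x - u x)) atTop (nhds 0)

/-- `f ∈ L²_⋄(Γ)`: square integrable on Γ with zero mean. -/
def MemL2diamond (Γ : Set (Euc d)) (f : Euc d → ℝ) : Prop :=
  MemLp f 2 (bdry Γ) ∧ ∫ x, f x ∂(bdry Γ) = 0

/-- `v ∈ H¹_⋄(Ω∖C₀)` (with weak gradient `g`), the boundary values on `Γ` being the trace,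
with zero mean on `Γ`. -/
def MemH1diamond (Ω Γ C₀ : Set (Euc d)) (v : Euc d → ℝ) (g : Euc d → Euc d) : Prop :=
  MemH1 v g (Ω \ C₀) ∧ MemLp v 2 (bdry Γ) ∧ TraceCompatible (Ω \ C₀) Γ v g ∧
    ∫ x, v x ∂(bdry Γ) = 0

/-- `v ∈ 𝓗_⋄(C₀,Cinf)`: member of `H¹_⋄(Ω∖C₀)` whose gradient vanishes in the interior of Cinf. -/
def MemHdiamond (Ω Γ C₀ Cinf : Set (Euc d)) (v : Euc d → ℝ) (g : Euc d → Euc d) : Prop :=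
  MemH1diamond Ω Γ C₀ v g ∧ ∀ᵐ x ∂(volume.restrict (interior Cinf)), g x = 0

/-- `(u,g)` is the weak solution `u_f^σ` (with `σ = σ(ς,C₀,Cinf)`) of the (possibly extreme)
conductivity problem with Neumann data `f` on `Γ`:
`∫_{Ω∖(C₀∪Cinf)} ς ∇u·∇v dx = ⟨f, v|_Γ⟩` for all `v ∈ 𝓗_⋄`. -/
def IsPotential (Ω Γ C₀ Cinf : Set (Euc d)) (ς : Euc d → ℝ) (f : Euc d → ℝ)
    (u : Euc d → ℝ) (g : Euc d → Euc d) : Prop :=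
  MemHdiamond Ω Γ C₀ Cinf u g ∧
    ∀ v gv, MemHdiamond Ω Γ C₀ Cinf v gv →
      (∫ x in Ω \ (C₀ ∪ Cinf), ς x * ⟪g x, gv x⟫) = ∫ x, f x * v x ∂(bdry Γ)

/-- The ε-truncated conductivity: `ς` outside `C₀ ∪ Cinf`, `ε·ς` in `C₀`, `ε⁻¹·ς` in `Cinf`. -/
def trunc (C₀ Cinf : Set (Euc d)) (ς : Euc d → ℝ) (ε : ℝ) : Euc d → ℝ :=
  fun x => if x ∈ C₀ then ε * ς x else if x ∈ Cinf then ε⁻¹ * ς x else ς x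

/-- `(û,ĝ)` is the extension `E(ς,C₀) u` of `(u,g) ∈ H¹(Ω∖C₀)` to `H¹(Ω)`, obtained by the
`ς`-harmonic extension inside `C₀` with Dirichlet data `u|_{∂C₀}`. -/
def IsHarmonicExtension (Ω C₀ : Set (Euc d)) (ς : Euc d → ℝ)
    (u : Euc d → ℝ) (g : Euc d → Euc d) (uh : Euc d → ℝ) (gh : Euc d → Euc d) : Prop :=
  MemH1 uh gh Ω ∧
    (∀ᵐ x ∂(volume.restrict (Ω \ C₀)), uh x = u x ∧ gh x = g x) ∧
    ∀ φ : Euc d → ℝ, ContDiff ℝ (⊤ : ℕ∞) φ → HasCompactSupport φ → tsupport φ ⊆ interior C₀ →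
      (∫ x in interior C₀, ς x * ⟪gh x, gradient φ x⟫) = 0

/-- `ς` satisfies the (weak) unique continuation principle in `Ω` for the conductivity
equation: any weak solution of `∇·(ς∇v) = 0` in `Ω` which either vanishes on some nonempty
open subset of `Ω`, or has vanishing Cauchy data on `Γ`, vanishes identically. -/
def SatisfiesUCP (Ω Γ : Set (Euc d)) (ς : Euc d → ℝ) : Prop :=
  ∀ v g, MemH1 v g Ω →
    (∀ φ : Euc d → ℝ, ContDiff ℝ (⊤ : ℕ∞) φ → HasCompactSupport φ → tsupport φ ⊆ Ω →
      (∫ x in Ω, ς x * ⟪g x, gradient φ x⟫) = 0) →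
    ((∃ W : Set (Euc d), W.Nonempty ∧ IsOpen W ∧ W ⊆ Ω ∧
        ∀ᵐ x ∂(volume.restrict W), v x = 0) ∨
      ((∀ᵐ x ∂(bdry Γ), v x = 0) ∧
        ∀ φ : Euc d → ℝ, ContDiff ℝ (⊤ : ℕ∞) φ → HasCompactSupport φ → tsupport φ ∩ frontier Ω ⊆ Γ →
          (∫ x in Ω, ς x * ⟪g x, gradient φ x⟫) = 0)) →
    ∀ᵐ x ∂(volume.restrict Ω), v x = 0

/-- The family 𝓐 of admissible test inclusions in `Ω`. -/
def MemA (Ω C : Set (Euc d)) : Prop :=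
  C ⊆ Ω ∧ C = closure (interior C) ∧ IsConnected Cᶜ ∧ HasLipschitzBoundary C

set_option maxHeartbeats 1000000

/-- Lemma 5.1, monotonicity principles: for `ς₁, ς₂ ∈ L∞₊(Ω)` and
`f ∈ L²_⋄(Γ)`, writing `⟨(Λ(ς₂) − Λ(ς₁))f, f⟩ = ∫_Γ (u₂ − u₁) f dS`:
`∫_Ω (ς₂/ς₁)(ς₁−ς₂)|∇u₂|² dx ≤ ⟨(Λ(ς₂) − Λ(ς₁))f, f⟩ ≤ ∫_Ω (ς₁−ς₂)|∇u₂|² dx`. -/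
theorem statement_11 {d : ℕ} (hd : 2 ≤ d) (Ω Γ : Set (Euc d))
    (hΩ : IsEITDomain Ω) (hΓ : IsBoundaryPiece Ω Γ)
    (ς₁ ς₂ : Euc d → ℝ) (h₁ : MemLinfPlus ς₁ Ω) (h₂ : MemLinfPlus ς₂ Ω)
    (f : Euc d → ℝ) (hf : MemL2diamond Γ f)
    (u₁ : Euc d → ℝ) (g₁ : Euc d → Euc d) (hu₁ : IsPotential Ω Γ ∅ ∅ ς₁ f u₁ g₁)
    (u₂ : Euc d → ℝ) (g₂ : Euc d → Euc d) (hu₂ : IsPotential Ω Γ ∅ ∅ ς₂ f u₂ g₂) :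
    (∫ x in Ω, (ς₂ x / ς₁ x) * (ς₁ x - ς₂ x) * ‖g₂ x‖ ^ 2)
        ≤ ∫ x, (u₂ x - u₁ x) * f x ∂(bdry Γ) ∧
    (∫ x, (u₂ x - u₁ x) * f x ∂(bdry Γ))
        ≤ ∫ x in Ω, (ς₁ x - ς₂ x) * ‖g₂ x‖ ^ 2 := by
  classical
  set μ : Measure (Euc d) := volume.restrict Ω with hμ
  -- basic memberships
  have hg₁ : MemLp g₁ 2 μ := by
    have := hu₁.1.1.1.2.1; simpa [Set.diff_empty] using this
  have hg₂ : MemLp g₂ 2 μ := by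
    have := hu₂.1.1.1.2.1; simpa [Set.diff_empty] using this
  have hm₁ : AEStronglyMeasurable ς₁ μ := h₁.1
  have hm₂ : AEStronglyMeasurable ς₂ μ := h₂.1
  obtain ⟨c₁, hc₁pos, hc₁⟩ := h₁.2.1
  obtain ⟨C₁, hC₁⟩ := h₁.2.2
  obtain ⟨c₂, hc₂pos, hc₂⟩ := h₂.2.1
  obtain ⟨C₂, hC₂⟩ := h₂.2.2
  -- a.e. bounds
  have hb₁ : ∀ᵐ x ∂μ, ‖ς₁ x‖ ≤ C₁ := by
    filter_upwards [hc₁, hC₁] with x h h'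
    rw [Real.norm_eq_abs, abs_le]; constructor <;> linarith
  have hb₂ : ∀ᵐ x ∂μ, ‖ς₂ x‖ ≤ C₂ := by
    filter_upwards [hc₂, hC₂] with x h h'
    rw [Real.norm_eq_abs, abs_le]; constructor <;> linarith
  have hbw : ∀ᵐ x ∂μ, ‖ς₂ x ^ 2 / ς₁ x‖ ≤ C₂ ^ 2 / c₁ := by
    filter_upwards [hc₁, hc₂, hC₂] with x h1 h2 h3
    have hx1 : (0:ℝ) < ς₁ x := lt_of_lt_of_le hc₁pos h1
    have hx2 : (0:ℝ) < ς₂ x := lt_of_lt_of_le hc₂pos h2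
    rw [Real.norm_eq_abs, abs_of_nonneg (by positivity)]
    apply div_le_div₀ (by positivity) _ hc₁pos h1
    nlinarith
  -- integrability of ς * ⟪g, h⟫ terms
  have key_int : ∀ (ς : Euc d → ℝ) (C : ℝ), AEStronglyMeasurable ς μ →
      (∀ᵐ x ∂μ, ‖ς x‖ ≤ C) → ∀ (g h : Euc d → Euc d), MemLp g 2 μ → MemLp h 2 μ →
      Integrable (fun x => ς x * ⟪g x, h x⟫) μ := by
    intro ς C hςm hςb g h hg hh
    have hinner : Integrable (fun x => ⟪g x, h x⟫) μ := by
      have := MeasureTheory.L2.integrable_inner (𝕜 := ℝ) (hg.toLp g) (hh.toLp h)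
      refine this.congr ?_
      filter_upwards [hg.coeFn_toLp, hh.coeFn_toLp] with x hx hy
      rw [hx, hy]
    exact hinner.bdd_mul hςm hςb
  have I11 := key_int ς₁ C₁ hm₁ hb₁ g₁ g₁ hg₁ hg₁
  have I12 := key_int ς₁ C₁ hm₁ hb₁ g₁ g₂ hg₁ hg₂
  have I22' := key_int ς₁ C₁ hm₁ hb₁ g₂ g₂ hg₂ hg₂
  have I212 := key_int ς₂ C₂ hm₂ hb₂ g₁ g₂ hg₁ hg₂
  have I222 := key_int ς₂ C₂ hm₂ hb₂ g₂ g₂ hg₂ hg₂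
  have Iw : Integrable (fun x => ς₂ x ^ 2 / ς₁ x * ⟪g₂ x, g₂ x⟫) μ :=
    key_int (fun x => ς₂ x ^ 2 / ς₁ x) (C₂ ^ 2 / c₁)
      (((hm₂.aemeasurable.pow_const 2).div hm₁.aemeasurable).aestronglyMeasurable)
      hbw g₂ g₂ hg₂ hg₂
  -- the four variational identities
  have var₁ := hu₁.2
  have var₂ := hu₂.2
  simp only [Set.union_empty, Set.diff_empty] at var₁ var₂
  have eq11 : (∫ x in Ω, ς₁ x * ⟪g₁ x, g₁ x⟫) = ∫ x, f x * u₁ x ∂(bdry Γ) :=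
    var₁ u₁ g₁ hu₁.1
  have eq12 : (∫ x in Ω, ς₁ x * ⟪g₁ x, g₂ x⟫) = ∫ x, f x * u₂ x ∂(bdry Γ) :=
    var₁ u₂ g₂ hu₂.1
  have eq21 : (∫ x in Ω, ς₂ x * ⟪g₂ x, g₁ x⟫) = ∫ x, f x * u₁ x ∂(bdry Γ) :=
    var₂ u₁ g₁ hu₁.1
  have eq22 : (∫ x in Ω, ς₂ x * ⟪g₂ x, g₂ x⟫) = ∫ x, f x * u₂ x ∂(bdry Γ) :=
    var₂ u₂ g₂ hu₂.1
  have eq21' : (∫ x in Ω, ς₂ x * ⟪g₁ x, g₂ x⟫) = ∫ x, f x * u₁ x ∂(bdry Γ) := by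
    rw [← eq21]; congr 1; ext x; rw [real_inner_comm]
  -- the boundary pairing
  have hfΓ : MemLp f 2 (bdry Γ) := hf.1
  have hu₁Γ : MemLp u₁ 2 (bdry Γ) := hu₁.1.1.2.1
  have hu₂Γ : MemLp u₂ 2 (bdry Γ) := hu₂.1.1.2.1
  have intfu₁ : Integrable (fun x => f x * u₁ x) (bdry Γ) := by
    have := MeasureTheory.L2.integrable_inner (𝕜 := ℝ) (hfΓ.toLp f) (hu₁Γ.toLp u₁)
    refine this.congr ?_
    filter_upwards [hfΓ.coeFn_toLp, hu₁Γ.coeFn_toLp] with x hx hy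
    rw [hx, hy]; exact RCLike.inner_apply' (f x) (u₁ x)
  have intfu₂ : Integrable (fun x => f x * u₂ x) (bdry Γ) := by
    have := MeasureTheory.L2.integrable_inner (𝕜 := ℝ) (hfΓ.toLp f) (hu₂Γ.toLp u₂)
    refine this.congr ?_
    filter_upwards [hfΓ.coeFn_toLp, hu₂Γ.coeFn_toLp] with x hx hy
    rw [hx, hy]; exact RCLike.inner_apply' (f x) (u₂ x)
  have hD : (∫ x, (u₂ x - u₁ x) * f x ∂(bdry Γ))
      = (∫ x, f x * u₂ x ∂(bdry Γ)) - ∫ x, f x * u₁ x ∂(bdry Γ) := by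
    rw [← integral_sub intfu₂ intfu₁]
    congr 1; ext x; ring
  set A := ∫ x, f x * u₁ x ∂(bdry Γ) with hA
  set B := ∫ x, f x * u₂ x ∂(bdry Γ) with hB
  -- first nonnegativity: 0 ≤ ∫ ς₁ ‖g₁ - g₂‖²
  have nonneg1 : 0 ≤ (∫ x in Ω, ς₁ x * ⟪g₁ x, g₁ x⟫) - 2 * (∫ x in Ω, ς₁ x * ⟪g₁ x, g₂ x⟫)
      + ∫ x in Ω, ς₁ x * ⟪g₂ x, g₂ x⟫ := by
    have hsum : (∫ x in Ω, (ς₁ x * ⟪g₁ x, g₁ x⟫ - 2 * (ς₁ x * ⟪g₁ x, g₂ x⟫)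
        + ς₁ x * ⟪g₂ x, g₂ x⟫))
        = (∫ x in Ω, ς₁ x * ⟪g₁ x, g₁ x⟫) - 2 * (∫ x in Ω, ς₁ x * ⟪g₁ x, g₂ x⟫)
          + ∫ x in Ω, ς₁ x * ⟪g₂ x, g₂ x⟫ := by
      have e1 : Integrable (fun x => ς₁ x * ⟪g₁ x, g₁ x⟫ - 2 * (ς₁ x * ⟪g₁ x, g₂ x⟫)) μ :=
        I11.sub (I12.const_mul 2)
      rw [integral_add e1 I22', integral_sub I11 (I12.const_mul 2), integral_const_mul]
    rw [← hsum]
    refine integral_nonneg_of_ae ?_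
    filter_upwards [hc₁] with x h1
    simp only [Pi.zero_apply]
    have hx1 : (0:ℝ) ≤ ς₁ x := le_of_lt (lt_of_lt_of_le hc₁pos h1)
    have : ς₁ x * ⟪g₁ x, g₁ x⟫ - 2 * (ς₁ x * ⟪g₁ x, g₂ x⟫) + ς₁ x * ⟪g₂ x, g₂ x⟫
        = ς₁ x * ‖g₁ x - g₂ x‖ ^ 2 := by
      rw [norm_sub_sq_real, real_inner_self_eq_norm_sq, real_inner_self_eq_norm_sq]; ring
    rw [this]; positivity
  -- second nonnegativity: 0 ≤ ∫ ς₁ ‖g₁ - (ς₂/ς₁) g₂‖²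
  have nonneg2 : 0 ≤ (∫ x in Ω, ς₁ x * ⟪g₁ x, g₁ x⟫) - 2 * (∫ x in Ω, ς₂ x * ⟪g₁ x, g₂ x⟫)
      + ∫ x in Ω, ς₂ x ^ 2 / ς₁ x * ⟪g₂ x, g₂ x⟫ := by
    have hsum : (∫ x in Ω, (ς₁ x * ⟪g₁ x, g₁ x⟫ - 2 * (ς₂ x * ⟪g₁ x, g₂ x⟫)
        + ς₂ x ^ 2 / ς₁ x * ⟪g₂ x, g₂ x⟫))
        = (∫ x in Ω, ς₁ x * ⟪g₁ x, g₁ x⟫) - 2 * (∫ x in Ω, ς₂ x * ⟪g₁ x, g₂ x⟫)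
          + ∫ x in Ω, ς₂ x ^ 2 / ς₁ x * ⟪g₂ x, g₂ x⟫ := by
      have e1 : Integrable (fun x => ς₁ x * ⟪g₁ x, g₁ x⟫ - 2 * (ς₂ x * ⟪g₁ x, g₂ x⟫)) μ :=
        I11.sub (I212.const_mul 2)
      rw [integral_add e1 Iw, integral_sub I11 (I212.const_mul 2), integral_const_mul]
    rw [← hsum]
    refine integral_nonneg_of_ae ?_
    filter_upwards [hc₁, hc₂] with x h1 h2
    simp only [Pi.zero_apply]
    have hx1 : (0:ℝ) < ς₁ x := lt_of_lt_of_le hc₁pos h1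
    have hx2 : (0:ℝ) < ς₂ x := lt_of_lt_of_le hc₂pos h2
    have hip : ⟪g₁ x, g₂ x⟫ ≤ ‖g₁ x‖ * ‖g₂ x‖ := real_inner_le_norm _ _
    rw [real_inner_self_eq_norm_sq, real_inner_self_eq_norm_sq]
    set a := ς₁ x; set b := ς₂ x
    set nx := ‖g₁ x‖; set ny := ‖g₂ x‖
    have hgoal : 0 ≤ a * nx ^ 2 - 2 * (b * (nx * ny)) + b ^ 2 / a * ny ^ 2 := by
      have h' : b ^ 2 / a * ny ^ 2 = (b * ny) ^ 2 / a := by ring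
      rw [h']
      have h2' : 0 ≤ (a * nx - b * ny) ^ 2 / a := by positivity
      have h3 : (a * nx - b * ny) ^ 2 / a
          = a * nx ^ 2 - 2 * (b * (nx * ny)) + (b * ny) ^ 2 / a := by
        field_simp; ring
      linarith [h3 ▸ h2']
    have hmul : b * ⟪g₁ x, g₂ x⟫ ≤ b * (nx * ny) := mul_le_mul_of_nonneg_left hip hx2.le
    nlinarith [hgoal, hmul]
  have h1' : 2 * B - A ≤ ∫ x in Ω, ς₁ x * ⟪g₂ x, g₂ x⟫ := by
    have := nonneg1; rw [eq11, eq12] at this; linarith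
  have h2' : A ≤ ∫ x in Ω, ς₂ x ^ 2 / ς₁ x * ⟪g₂ x, g₂ x⟫ := by
    have := nonneg2; rw [eq11, eq21'] at this; linarith
  constructor
  · -- lower bound
    have hLHS : (∫ x in Ω, (ς₂ x / ς₁ x) * (ς₁ x - ς₂ x) * ‖g₂ x‖ ^ 2)
        = (∫ x in Ω, ς₂ x * ⟪g₂ x, g₂ x⟫) - ∫ x in Ω, ς₂ x ^ 2 / ς₁ x * ⟪g₂ x, g₂ x⟫ := by
      rw [← integral_sub I222 Iw]
      refine integral_congr_ae ?_
      filter_upwards [hc₁] with x h1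
      have hx1 : ς₁ x ≠ 0 := ne_of_gt (lt_of_lt_of_le hc₁pos h1)
      show (ς₂ x / ς₁ x) * (ς₁ x - ς₂ x) * ‖g₂ x‖ ^ 2
          = ς₂ x * ⟪g₂ x, g₂ x⟫ - ς₂ x ^ 2 / ς₁ x * ⟪g₂ x, g₂ x⟫
      rw [real_inner_self_eq_norm_sq]
      field_simp
    rw [hLHS, eq22, hD]
    linarith
  · -- upper bound
    have hRHS : (∫ x in Ω, (ς₁ x - ς₂ x) * ‖g₂ x‖ ^ 2)
        = (∫ x in Ω, ς₁ x * ⟪g₂ x, g₂ x⟫) - ∫ x in Ω, ς₂ x * ⟪g₂ x, g₂ x⟫ := by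
      rw [← integral_sub I22' I222]
      refine integral_congr_ae (Filter.Eventually.of_forall fun x => ?_)
      show (ς₁ x - ς₂ x) * ‖g₂ x‖ ^ 2 = ς₁ x * ⟪g₂ x, g₂ x⟫ - ς₂ x * ⟪g₂ x, g₂ x⟫
      rw [real_inner_self_eq_norm_sq]; ring
    rw [hRHS, eq22, hD]
    linarith

end EIT
end
end

section
/- Let C = C₀ ∪ C∞ satisfy Assumption 1, ς₁, ς₂ ∈ L∞₊(Ω), and f ∈ L²_⋄(Γ). With u_{ς,C₀,C∞} := E(ς,C₀) u_f^{σ(ς,C₀,C∞)} and Λ_{ς,C₀,C∞} := Λ(σ(ς,C₀,C∞)), the following two-sided monotonicity estimate holds for the same extreme inclusions but different background conductivities: ∫_{Ω∖C} (ς₂/ς₁)(ς₁ − ς₂) |∇ u_{ς₂,C₀,C∞}|² dx ≤ ⟨(Λ_{ς₂,C₀,C∞} − Λ_{ς₁,C₀,C∞}) f, f⟩ ≤ ∫_{Ω∖C} (ς₁ − ς₂) |∇ u_{ς₂,C₀,C∞}|² dx. -/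
open MeasureTheory Set Filter Topology
open scoped ENNReal NNReal RealInnerProductSpace MeasureTheory Classical

noncomputable section

namespace EIT

variable {d : ℕ}

private lemma inner_integrable_of_memL2 {α : Type*} [MeasurableSpace α] {μ : Measure α}
    {E : Type*} [NormedAddCommGroup E] [InnerProductSpace ℝ E]
    {g h : α → E} (hg : MemLp g 2 μ) (hh : MemLp h 2 μ) :
    Integrable (fun x => ⟪g x, h x⟫) μ := by
  have h2 := MeasureTheory.L2.integrable_inner (𝕜 := ℝ) (hg.toLp g) (hh.toLp h)
  refine h2.congr ?_
  filter_upwards [hg.coeFn_toLp, hh.coeFn_toLp] with x hx hy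
  rw [hx, hy]

private lemma mul_integrable_of_memL2 {α : Type*} [MeasurableSpace α] {μ : Measure α}
    {g h : α → ℝ} (hg : MemLp g 2 μ) (hh : MemLp h 2 μ) :
    Integrable (fun x => g x * h x) μ := by
  have := inner_integrable_of_memL2 (E := ℝ) hg hh
  simpa [RCLike.inner_apply, mul_comm] using this

/-- Lemma A.1(i): same extreme inclusions, different background
conductivities, with `u_{ς₂,C₀,C∞} = E(ς₂,C₀) u_f^{σ(ς₂,C₀,C∞)}`:
`∫_{Ω∖C} (ς₂/ς₁)(ς₁−ς₂)|∇u_{ς₂,C₀,C∞}|² ≤ ⟨(Λ_{ς₂,C₀,C∞} − Λ_{ς₁,C₀,C∞})f, f⟩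
≤ ∫_{Ω∖C} (ς₁−ς₂)|∇u_{ς₂,C₀,C∞}|²`. -/
theorem statement_16 {d : ℕ} (hd : 2 ≤ d) (Ω Γ : Set (Euc d))
    (hΩ : IsEITDomain Ω) (hΓ : IsBoundaryPiece Ω Γ)
    (C₀ Cinf : Set (Euc d)) (hC : Assumption1 Ω C₀ Cinf)
    (ς₁ ς₂ : Euc d → ℝ) (h₁ : MemLinfPlus ς₁ Ω) (h₂ : MemLinfPlus ς₂ Ω)
    (f : Euc d → ℝ) (hf : MemL2diamond Γ f)
    (u₁ : Euc d → ℝ) (g₁ : Euc d → Euc d) (hu₁ : IsPotential Ω Γ C₀ Cinf ς₁ f u₁ g₁)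
    (u₂ : Euc d → ℝ) (g₂ : Euc d → Euc d) (hu₂ : IsPotential Ω Γ C₀ Cinf ς₂ f u₂ g₂)
    (uh₂ : Euc d → ℝ) (gh₂ : Euc d → Euc d)
    (hext : IsHarmonicExtension Ω C₀ ς₂ u₂ g₂ uh₂ gh₂) :
    (∫ x in Ω \ (C₀ ∪ Cinf), (ς₂ x / ς₁ x) * (ς₁ x - ς₂ x) * ‖gh₂ x‖ ^ 2)
        ≤ ∫ x, (u₂ x - u₁ x) * f x ∂(bdry Γ) ∧
    (∫ x, (u₂ x - u₁ x) * f x ∂(bdry Γ))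
        ≤ ∫ x in Ω \ (C₀ ∪ Cinf), (ς₁ x - ς₂ x) * ‖gh₂ x‖ ^ 2 := by
  obtain ⟨hP₁, hweak₁⟩ := hu₁
  obtain ⟨hP₂, hweak₂⟩ := hu₂
  obtain ⟨hm₁, ⟨c₁, hc₁pos, hc₁⟩, ⟨C₁, hC₁⟩⟩ := h₁
  obtain ⟨hm₂, ⟨c₂, hc₂pos, hc₂⟩, ⟨C₂, hC₂⟩⟩ := h₂
  set μ := volume.restrict (Ω \ (C₀ ∪ Cinf)) with hμdef
  have hSsub : Ω \ (C₀ ∪ Cinf) ⊆ Ω \ C₀ := fun x hx => ⟨hx.1, fun h => hx.2 (Or.inl h)⟩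
  have hSΩ : Ω \ (C₀ ∪ Cinf) ⊆ Ω := fun x hx => hx.1
  have hle : μ ≤ volume.restrict (Ω \ C₀) := Measure.restrict_mono hSsub le_rfl
  have hleΩ : μ ≤ volume.restrict Ω := Measure.restrict_mono hSΩ le_rfl
  have hg₁ : MemLp g₁ 2 μ := (hP₁.1.1.2.1).mono_measure hle
  have hg₂ : MemLp g₂ 2 μ := (hP₂.1.1.2.1).mono_measure hle
  have hm₁' : AEStronglyMeasurable ς₁ μ := hm₁.mono_measure hleΩ
  have hm₂' : AEStronglyMeasurable ς₂ μ := hm₂.mono_measure hleΩ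
  have hb₁ : ∀ᵐ x ∂μ, c₁ ≤ ς₁ x ∧ ς₁ x ≤ C₁ :=
    ae_restrict_of_ae_restrict_of_subset hSΩ (hc₁.and hC₁)
  have hb₂ : ∀ᵐ x ∂μ, c₂ ≤ ς₂ x ∧ ς₂ x ≤ C₂ :=
    ae_restrict_of_ae_restrict_of_subset hSΩ (hc₂.and hC₂)
  have i12 : Integrable (fun x => ⟪g₁ x, g₂ x⟫) μ := inner_integrable_of_memL2 hg₁ hg₂
  have i11 : Integrable (fun x => ⟪g₁ x, g₁ x⟫) μ := inner_integrable_of_memL2 hg₁ hg₁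
  have i22 : Integrable (fun x => ⟪g₂ x, g₂ x⟫) μ := inner_integrable_of_memL2 hg₂ hg₂
  have bnd₁ : ∀ᵐ x ∂μ, ‖ς₁ x‖ ≤ C₁ := by
    filter_upwards [hb₁] with x hx
    rw [Real.norm_eq_abs, abs_of_pos (hc₁pos.trans_le hx.1)]; exact hx.2
  have bnd₂ : ∀ᵐ x ∂μ, ‖ς₂ x‖ ≤ C₂ := by
    filter_upwards [hb₂] with x hx
    rw [Real.norm_eq_abs, abs_of_pos (hc₂pos.trans_le hx.1)]; exact hx.2
  have iA : Integrable (fun x => ς₁ x * ⟪g₁ x, g₁ x⟫) μ := i11.bdd_mul hm₁' bnd₁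
  have iB : Integrable (fun x => ς₁ x * ⟪g₁ x, g₂ x⟫) μ := i12.bdd_mul hm₁' bnd₁
  have iG : Integrable (fun x => ς₁ x * ⟪g₂ x, g₂ x⟫) μ := i22.bdd_mul hm₁' bnd₁
  have iE : Integrable (fun x => ς₂ x * ⟪g₁ x, g₂ x⟫) μ := i12.bdd_mul hm₂' bnd₂
  have iF : Integrable (fun x => ς₂ x * ⟪g₂ x, g₂ x⟫) μ := i22.bdd_mul hm₂' bnd₂
  have hmq : AEStronglyMeasurable (fun x => ς₂ x ^ 2 / ς₁ x) μ :=
    ((hm₂'.aemeasurable.pow_const 2).div hm₁'.aemeasurable).aestronglyMeasurable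
  have bndq : ∀ᵐ x ∂μ, ‖ς₂ x ^ 2 / ς₁ x‖ ≤ C₂ ^ 2 / c₁ := by
    filter_upwards [hb₁, hb₂] with x h1 h2
    have hpos1 : 0 < ς₁ x := hc₁pos.trans_le h1.1
    have hpos2 : 0 < ς₂ x := hc₂pos.trans_le h2.1
    rw [Real.norm_eq_abs, abs_of_nonneg (by positivity)]
    exact div_le_div₀ (by positivity) (by nlinarith [h2.2]) hc₁pos h1.1
  have iH : Integrable (fun x => (ς₂ x ^ 2 / ς₁ x) * ⟪g₂ x, g₂ x⟫) μ := i22.bdd_mul hmq bndq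
  -- boundary integrability
  have ifu₁ : Integrable (fun x => f x * u₁ x) (bdry Γ) :=
    mul_integrable_of_memL2 hf.1 hP₁.1.2.1
  have ifu₂ : Integrable (fun x => f x * u₂ x) (bdry Γ) :=
    mul_integrable_of_memL2 hf.1 hP₂.1.2.1
  -- weak formulation identities
  have eqA : (∫ x, ς₁ x * ⟪g₁ x, g₁ x⟫ ∂μ) = ∫ x, f x * u₁ x ∂(bdry Γ) := hweak₁ u₁ g₁ hP₁
  have eqB : (∫ x, ς₁ x * ⟪g₁ x, g₂ x⟫ ∂μ) = ∫ x, f x * u₂ x ∂(bdry Γ) := hweak₁ u₂ g₂ hP₂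
  have eqF : (∫ x, ς₂ x * ⟪g₂ x, g₂ x⟫ ∂μ) = ∫ x, f x * u₂ x ∂(bdry Γ) := hweak₂ u₂ g₂ hP₂
  have eqE : (∫ x, ς₂ x * ⟪g₁ x, g₂ x⟫ ∂μ) = ∫ x, f x * u₁ x ∂(bdry Γ) := by
    have h0 : (∫ x, ς₂ x * ⟪g₂ x, g₁ x⟫ ∂μ) = ∫ x, f x * u₁ x ∂(bdry Γ) := hweak₂ u₁ g₁ hP₁
    rw [← h0]
    refine integral_congr_ae (Eventually.of_forall fun x => ?_)
    show ς₂ x * ⟪g₁ x, g₂ x⟫ = ς₂ x * ⟪g₂ x, g₁ x⟫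
    rw [real_inner_comm]
  -- boundary rewriting
  have hKJ : (∫ x, (u₂ x - u₁ x) * f x ∂(bdry Γ))
      = (∫ x, f x * u₂ x ∂(bdry Γ)) - ∫ x, f x * u₁ x ∂(bdry Γ) := by
    rw [← integral_sub ifu₂ ifu₁]
    exact integral_congr_ae (Eventually.of_forall fun x => by ring)
  -- extension equals u₂ on Ω \ C
  have hgh : ∀ᵐ x ∂μ, gh₂ x = g₂ x := by
    have := ae_restrict_of_ae_restrict_of_subset hSsub hext.2.1
    exact this.mono fun x hx => hx.2
  -- rewrite targets
  have tR : (∫ x, (ς₁ x - ς₂ x) * ‖gh₂ x‖ ^ 2 ∂μ)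
      = (∫ x, ς₁ x * ⟪g₂ x, g₂ x⟫ ∂μ) - ∫ x, ς₂ x * ⟪g₂ x, g₂ x⟫ ∂μ := by
    rw [← integral_sub iG iF]
    refine integral_congr_ae ?_
    filter_upwards [hgh] with x hx
    rw [hx, real_inner_self_eq_norm_sq]; ring
  have tL : (∫ x, (ς₂ x / ς₁ x) * (ς₁ x - ς₂ x) * ‖gh₂ x‖ ^ 2 ∂μ)
      = (∫ x, ς₂ x * ⟪g₂ x, g₂ x⟫ ∂μ) - ∫ x, (ς₂ x ^ 2 / ς₁ x) * ⟪g₂ x, g₂ x⟫ ∂μ := by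
    rw [← integral_sub iF iH]
    refine integral_congr_ae ?_
    filter_upwards [hgh, hb₁] with x hx h1
    have h0 : ς₁ x ≠ 0 := (hc₁pos.trans_le h1.1).ne'
    rw [hx, real_inner_self_eq_norm_sq]
    field_simp
  -- first nonnegativity
  have pos₁ : 0 ≤ ∫ x, ς₁ x * ⟪g₁ x - g₂ x, g₁ x - g₂ x⟫ ∂μ := by
    refine integral_nonneg_of_ae ?_
    filter_upwards [hb₁] with x hx
    exact mul_nonneg (hc₁pos.trans_le hx.1).le real_inner_self_nonneg
  have exp₁ : (∫ x, ς₁ x * ⟪g₁ x - g₂ x, g₁ x - g₂ x⟫ ∂μ)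
      = (∫ x, ς₁ x * ⟪g₁ x, g₁ x⟫ ∂μ) - 2 * (∫ x, ς₁ x * ⟪g₁ x, g₂ x⟫ ∂μ)
        + ∫ x, ς₁ x * ⟪g₂ x, g₂ x⟫ ∂μ := by
    have h1 : (fun x => ς₁ x * ⟪g₁ x - g₂ x, g₁ x - g₂ x⟫)
        = fun x => (ς₁ x * ⟪g₁ x, g₁ x⟫ - 2 * (ς₁ x * ⟪g₁ x, g₂ x⟫)) + ς₁ x * ⟪g₂ x, g₂ x⟫ := by
      funext x
      simp only [inner_sub_left, inner_sub_right, real_inner_comm (g₂ x) (g₁ x)]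
      ring
    have iB2 : Integrable (fun x => 2 * (ς₁ x * ⟪g₁ x, g₂ x⟫)) μ := iB.const_mul 2
    have iAB : Integrable (fun x => ς₁ x * ⟪g₁ x, g₁ x⟫ - 2 * (ς₁ x * ⟪g₁ x, g₂ x⟫)) μ :=
      iA.sub iB2
    rw [h1, integral_add iAB iG, integral_sub iA iB2, integral_const_mul]
  -- second nonnegativity
  have pos₂ : 0 ≤ ∫ x, ς₁ x * ⟪(ς₂ x / ς₁ x) • g₂ x - g₁ x, (ς₂ x / ς₁ x) • g₂ x - g₁ x⟫ ∂μ := by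
    refine integral_nonneg_of_ae ?_
    filter_upwards [hb₁] with x hx
    exact mul_nonneg (hc₁pos.trans_le hx.1).le real_inner_self_nonneg
  have exp₂ : (∫ x, ς₁ x * ⟪(ς₂ x / ς₁ x) • g₂ x - g₁ x, (ς₂ x / ς₁ x) • g₂ x - g₁ x⟫ ∂μ)
      = (∫ x, (ς₂ x ^ 2 / ς₁ x) * ⟪g₂ x, g₂ x⟫ ∂μ) - 2 * (∫ x, ς₂ x * ⟪g₁ x, g₂ x⟫ ∂μ)
        + ∫ x, ς₁ x * ⟪g₁ x, g₁ x⟫ ∂μ := by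
    have h1 : (fun x => ς₁ x * ⟪(ς₂ x / ς₁ x) • g₂ x - g₁ x, (ς₂ x / ς₁ x) • g₂ x - g₁ x⟫)
        =ᵐ[μ] fun x => ((ς₂ x ^ 2 / ς₁ x) * ⟪g₂ x, g₂ x⟫ - 2 * (ς₂ x * ⟪g₁ x, g₂ x⟫))
          + ς₁ x * ⟪g₁ x, g₁ x⟫ := by
      filter_upwards [hb₁] with x hx
      have h0 : ς₁ x ≠ 0 := (hc₁pos.trans_le hx.1).ne'
      simp only [inner_sub_left, inner_sub_right, real_inner_smul_left, real_inner_smul_right,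
        real_inner_comm (g₂ x) (g₁ x)]
      field_simp
      ring
    have iE2 : Integrable (fun x => 2 * (ς₂ x * ⟪g₁ x, g₂ x⟫)) μ := iE.const_mul 2
    have iHE : Integrable
        (fun x => (ς₂ x ^ 2 / ς₁ x) * ⟪g₂ x, g₂ x⟫ - 2 * (ς₂ x * ⟪g₁ x, g₂ x⟫)) μ :=
      iH.sub iE2
    rw [integral_congr_ae h1, integral_add iHE iA, integral_sub iH iE2, integral_const_mul]
  constructor
  · rw [hKJ, tL]; linarith [pos₂, exp₂ ▸ pos₂]
  · rw [hKJ, tR]; linarith [exp₁ ▸ pos₁]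


end EIT
end
end
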